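/- arXiv:1010.2818 — 3 statements merged into one kernel-verified Lean document; each statement's English description precedes it below -/
import Mathlib

section
/- The Minimum-Energy Multicast Tree Construction and Scheduling (MEMTCS) problem is NP-hard: the Minimum Hitting Set problem reduces in polynomial time to MEMTCS. Concretely, given a finite set F = {f_1,...,f_p} and a collection C = {C_1,...,C_q} of subsets of F, construct a star graph with center x and leaves v_1,...,v_q where Γ(v_j) = {i : f_i ∈ C_j}; with source x, terminal set all nodes, e_s = 1, e_r = 0, the collection C has a hitting set of size at most k if and only if there is a multicast tree T rooted at x with feasible schedule B such that Π(T,B) ≤ k. -/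
/-- Rooted tree inside a graph `H`, encoded by a parent function and a depth
certificate of acyclicity; it will serve as a multicast tree. -/
structure DCTree {α : Type*} (H : SimpleGraph α) (r : α) where
  nodes : Finset α
  parent : α → α
  depth : α → ℕ
  root_mem : r ∈ nodes
  parent_mem : ∀ v ∈ nodes, v ≠ r → parent v ∈ nodes
  parent_adj : ∀ v ∈ nodes, v ≠ r → H.Adj (parent v) v
  depth_lt : ∀ v ∈ nodes, v ≠ r → depth (parent v) < depth v

namespace DCTree

variable {α β : Type*} [DecidableEq α] [DecidableEq β] {H : SimpleGraph α} {r : α}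

/-- children of `u` in the rooted tree -/
def children (T : DCTree H r) (u : α) : Finset α :=
  T.nodes.filter fun v => v ≠ r ∧ T.parent v = u

/-- non-leaf nodes of the rooted tree -/
def nl (T : DCTree H r) : Finset α :=
  T.nodes.filter fun u => (T.children u).Nonempty

/-- `B` is a feasible schedule for the multicast tree `T`: the schedule of each
node hits the active-slot set of each of its children. -/
def IsFeasible (Γ : α → Finset β) (T : DCTree H r) (B : α → Finset β) : Prop :=
  ∀ u ∈ T.nodes, ∀ v ∈ T.children u, (B u ∩ Γ v).Nonempty

/-- the total energy cost `Π(T,B)` of a multicast session -/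
def cost (T : DCTree H r) (B : α → Finset β) (es er : ℕ) : ℕ :=
  (∑ u ∈ T.nl, (B u).card) * es + (T.nodes.card - 1) * er

end DCTree

/-- The star graph with centre `none` and leaves `some j`. -/
def starGraph (q : ℕ) : SimpleGraph (Option (Fin q)) where
  Adj x y := x ≠ y ∧ (x = none ∨ y = none)
  symm := ⟨fun _ _ ⟨h1, h2⟩ => ⟨h1.symm, h2.symm⟩⟩
  loopless := ⟨fun _ ⟨h, _⟩ => h rfl⟩

/-- active-slot sets of the star reduction: the leaf `v_j` has `Γ(v_j) = C j`
(identifying the slot `i` with the element `f_i`). -/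
def starSlots {p q : ℕ} (C : Fin q → Finset (Fin p)) :
    Option (Fin q) → Finset (Fin p) :=
  fun x => x.elim Finset.univ C

/-- **NP-hardness reduction.** Given a finite set
`F = {f_1,…,f_p}` and a collection `C = {C_1,…,C_q}` of nonempty subsets of
`F`, build the star graph with centre `x = none` and leaves `v_j = some j`,
where `Γ(v_j) = {i : f_i ∈ C_j}`.  With source `x`, terminal set all nodes,
`e_s = 1` and `e_r = 0`, the collection `C` has a hitting set of size at most
`k` iff there is a multicast tree `T` rooted at `x` (spanning all nodes) with a
feasible schedule `B` such that `Π(T,B) ≤ k`. -/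
theorem memtcs_NPhard_reduction (p q k : ℕ) (C : Fin q → Finset (Fin p))
    (hC : ∀ j, (C j).Nonempty) :
    (∃ Hs : Finset (Fin p), (∀ j, (Hs ∩ C j).Nonempty) ∧ Hs.card ≤ k) ↔
      (∃ T : DCTree (starGraph q) (none : Option (Fin q)),
        (Finset.univ : Finset (Option (Fin q))) ⊆ T.nodes ∧
        ∃ B : Option (Fin q) → Finset (Fin p),
          T.IsFeasible (starSlots C) B ∧ T.cost B 1 0 ≤ k) := by
  constructor
  · rintro ⟨Hs, hhit, hcard⟩
    refine ⟨⟨Finset.univ, fun _ => none, fun x => x.elim 0 (fun _ => 1),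
      Finset.mem_univ _, fun _ _ _ => Finset.mem_univ _,
      ?_, ?_⟩, Finset.Subset.refl _, fun x => x.elim Hs (fun _ => ∅), ?_, ?_⟩
    · rintro (_ | j) _ hv
      · exact absurd rfl hv
      · exact ⟨(hv.symm : _), Or.inl rfl⟩
    · rintro (_ | j) _ hv
      · exact absurd rfl hv
      · exact Nat.zero_lt_one
    · rintro u _ v hv
      simp only [DCTree.children, Finset.mem_filter] at hv
      obtain ⟨-, hvne, hpar⟩ := hv
      subst hpar
      rcases v with _ | j
      · exact absurd rfl hvne
      · exact hhit j
    · have hnl : (DCTree.nl (H := starGraph q) (r := (none : Option (Fin q)))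
          ⟨Finset.univ, fun _ => none, fun x => x.elim 0 (fun _ => 1), Finset.mem_univ _,
           fun _ _ _ => Finset.mem_univ _, by
             rintro (_ | j) _ hv
             · exact absurd rfl hv
             · exact ⟨(hv.symm : _), Or.inl rfl⟩, by
             rintro (_ | j) _ hv
             · exact absurd rfl hv
             · exact Nat.zero_lt_one⟩) ⊆ {none} := by
        intro u hu
        simp only [DCTree.nl, DCTree.children, Finset.mem_filter] at hu
        obtain ⟨-, v, hv⟩ := hu
        simp only [Finset.mem_filter] at hv
        simp [← hv.2.2]
      simp only [DCTree.cost, mul_one, mul_zero, add_zero]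
      calc ∑ u ∈ _, ((fun x => Option.elim x Hs (fun _ => ∅)) u).card
          ≤ ∑ u ∈ ({none} : Finset (Option (Fin q))),
              ((fun x => Option.elim x Hs (fun _ => ∅)) u).card :=
            Finset.sum_le_sum_of_subset hnl
        _ ≤ k := by simpa using hcard
  · rintro ⟨T, hsub, B, hfeas, hcost⟩
    rcases Nat.eq_zero_or_pos q with hq | hq
    · exact ⟨∅, fun j => absurd j.2 (by omega), Nat.zero_le k⟩
    · refine ⟨B none, ?_, ?_⟩
      · intro j
        have hmem : (some j : Option (Fin q)) ∈ T.nodes := hsub (Finset.mem_univ _)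
        have hne : (some j : Option (Fin q)) ≠ none := by simp
        have hadj := T.parent_adj _ hmem hne
        have hpar : T.parent (some j) = none := by
          rcases hadj.2 with h | h
          · exact h
          · exact absurd h hne
        have hch : (some j : Option (Fin q)) ∈ T.children none := by
          simp [DCTree.children, hmem, hne, hpar]
        exact hfeas none (T.root_mem) _ hch
      · have j0 : Fin q := ⟨0, hq⟩
        have hmem : (some j0 : Option (Fin q)) ∈ T.nodes := hsub (Finset.mem_univ _)
        have hne : (some j0 : Option (Fin q)) ≠ none := by simp
        have hpar : T.parent (some j0) = none := by
          rcases (T.parent_adj _ hmem hne).2 with h | h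
          · exact h
          · exact absurd h hne
        have hnl : (none : Option (Fin q)) ∈ T.nl := by
          simp only [DCTree.nl, Finset.mem_filter]
          exact ⟨T.root_mem, ⟨some j0, by simp [DCTree.children, hmem, hne, hpar]⟩⟩
        have hle : (B none).card ≤ ∑ u ∈ T.nl, (B u).card :=
          Finset.single_le_sum (f := fun u => (B u).card) (fun _ _ => Nat.zero_le _) hnl
        calc (B none).card ≤ ∑ u ∈ T.nl, (B u).card := hle
          _ ≤ T.cost B 1 0 := by simp [DCTree.cost]
          _ ≤ k := hcost
end

section
/- In the star reduction, the minimum hitting set size equals the minimum multicast cost: for the star graph with center x, leaves v_1,...,v_q, Γ(v_j) = {i : f_i ∈ C_j}, e_s = 1, e_r = 0, the only multicast tree rooted at x spanning all nodes is the star itself, and the minimum over feasible schedules B of Π(T,B) = |B(x)| equals the minimum size of a hitting set of the collection {C_1,...,C_q} (identifying slot i with element f_i). -/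
/-- the canonical star tree -/
def starTree (q : ℕ) : DCTree (starGraph q) (none : Option (Fin q)) where
  nodes := Finset.univ
  parent := fun _ => none
  depth := fun x => if x = none then 0 else 1
  root_mem := Finset.mem_univ _
  parent_mem := fun _ _ _ => Finset.mem_univ _
  parent_adj := fun v _ hv => ⟨fun h => hv h.symm, Or.inl rfl⟩
  depth_lt := fun v _ hv => by simp [hv]

lemma starTree_nl_subset (q : ℕ) : (starTree q).nl ⊆ {none} := by
  intro u hu
  rw [DCTree.nl, Finset.mem_filter] at hu
  obtain ⟨v, hv⟩ := hu.2
  rw [DCTree.children, Finset.mem_filter] at hv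
  simp [starTree] at hv ⊢
  exact hv.2.symm

lemma starTree_cost_le {p q : ℕ} (Hs : Finset (Fin p)) :
    (starTree q).cost (fun _ => Hs) 1 0 ≤ Hs.card := by
  rw [DCTree.cost]
  simp only [mul_one, mul_zero, add_zero, Finset.sum_const, smul_eq_mul]
  have h1 : (starTree q).nl.card ≤ 1 := by
    have := Finset.card_le_card (starTree_nl_subset q)
    simpa using this
  calc (starTree q).nl.card * Hs.card ≤ 1 * Hs.card :=
        Nat.mul_le_mul_right _ h1
    _ = Hs.card := one_mul _

lemma starTree_feasible {p q : ℕ} (C : Fin q → Finset (Fin p))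
    (Hs : Finset (Fin p)) (hHs : ∀ j, (Hs ∩ C j).Nonempty) :
    (starTree q).IsFeasible (starSlots C) (fun _ => Hs) := by
  intro u hu v hv
  rw [DCTree.children, Finset.mem_filter] at hv
  obtain ⟨_, hvne, _⟩ := hv
  obtain ⟨j, rfl⟩ := Option.ne_none_iff_exists'.mp hvne
  exact hHs j

/-- In the star reduction the minimum hitting set size equals
the minimum multicast cost: for the star graph with centre `x = none`, leaves
`v_j`, `Γ(v_j) = C j`, `e_s = 1`, `e_r = 0`, the only multicast tree rooted at
`x` spanning all nodes is the star itself (every non-centre node has parent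
`x`), and the minimum over feasible schedules `B` of `Π(T,B) = |B(x)|` equals
the minimum size of a hitting set of the collection `{C_1,…,C_q}`. -/
theorem star_reduction_min_cost_eq_min_hitting (p q : ℕ)
    (C : Fin q → Finset (Fin p)) (hC : ∀ j, (C j).Nonempty) :
    (∀ T : DCTree (starGraph q) (none : Option (Fin q)),
      (Finset.univ : Finset (Option (Fin q))) ⊆ T.nodes →
        ∀ v : Option (Fin q), v ≠ none → T.parent v = none) ∧
    sInf {n : ℕ | ∃ (T : DCTree (starGraph q) (none : Option (Fin q)))
        (B : Option (Fin q) → Finset (Fin p)),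
        (Finset.univ : Finset (Option (Fin q))) ⊆ T.nodes ∧
        T.IsFeasible (starSlots C) B ∧ T.cost B 1 0 = n} =
      sInf {n : ℕ | ∃ Hs : Finset (Fin p),
        (∀ j, (Hs ∩ C j).Nonempty) ∧ Hs.card = n} := by
  have hpar : ∀ T : DCTree (starGraph q) (none : Option (Fin q)),
      (Finset.univ : Finset (Option (Fin q))) ⊆ T.nodes →
        ∀ v : Option (Fin q), v ≠ none → T.parent v = none := by
    intro T hT v hv
    have hadj := T.parent_adj v (hT (Finset.mem_univ v)) hv
    rcases hadj.2 with h | h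
    · exact h
    · exact absurd h hv
  refine ⟨hpar, ?_⟩
  have hmem : ∀ Hs : Finset (Fin p), (∀ j, (Hs ∩ C j).Nonempty) →
      ∃ n ∈ {n : ℕ | ∃ (T : DCTree (starGraph q) (none : Option (Fin q)))
        (B : Option (Fin q) → Finset (Fin p)),
        (Finset.univ : Finset (Option (Fin q))) ⊆ T.nodes ∧
        T.IsFeasible (starSlots C) B ∧ T.cost B 1 0 = n}, n ≤ Hs.card := by
    intro Hs hHs
    exact ⟨_, ⟨starTree q, fun _ => Hs, Finset.Subset.refl _,
      starTree_feasible C Hs hHs, rfl⟩, starTree_cost_le Hs⟩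
  have hS2ne : {n : ℕ | ∃ Hs : Finset (Fin p),
      (∀ j, (Hs ∩ C j).Nonempty) ∧ Hs.card = n}.Nonempty :=
    ⟨_, Finset.univ, fun j => by simpa using hC j, rfl⟩
  have hS1ne : {n : ℕ | ∃ (T : DCTree (starGraph q) (none : Option (Fin q)))
        (B : Option (Fin q) → Finset (Fin p)),
        (Finset.univ : Finset (Option (Fin q))) ⊆ T.nodes ∧
        T.IsFeasible (starSlots C) B ∧ T.cost B 1 0 = n}.Nonempty := by
    obtain ⟨n, hn, _⟩ := hmem Finset.univ (fun j => by simpa using hC j)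
    exact ⟨n, hn⟩
  apply le_antisymm
  · -- sInf S1 ≤ sInf S2
    obtain ⟨Hs, hHs, hcard⟩ := Nat.sInf_mem hS2ne
    obtain ⟨n, hn, hle⟩ := hmem Hs hHs
    exact le_trans (Nat.sInf_le hn) (hcard ▸ hle)
  · -- sInf S2 ≤ sInf S1
    obtain ⟨T, B, hspan, hfeas, hcost⟩ := Nat.sInf_mem hS1ne
    rcases Nat.eq_zero_or_pos q with hq | hq
    · subst hq
      have h0 : (0 : ℕ) ∈ {n : ℕ | ∃ Hs : Finset (Fin p),
          (∀ j, (Hs ∩ C j).Nonempty) ∧ Hs.card = n} :=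
        ⟨∅, fun j => j.elim0, Finset.card_empty⟩
      exact le_trans (Nat.sInf_le h0) (Nat.zero_le _)
    · have hchild : ∀ j : Fin q, some j ∈ T.children none := by
        intro j
        rw [DCTree.children, Finset.mem_filter]
        exact ⟨hspan (Finset.mem_univ _), Option.some_ne_none j,
          hpar T hspan (some j) (Option.some_ne_none j)⟩
      have hhit : ∀ j, (B none ∩ C j).Nonempty := by
        intro j
        have := hfeas none T.root_mem (some j) (hchild j)
        simpa [starSlots] using this
      have hnl : none ∈ T.nl := by
        rw [DCTree.nl, Finset.mem_filter]
        exact ⟨T.root_mem, ⟨some ⟨0, hq⟩, hchild ⟨0, hq⟩⟩⟩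
      have hle : (B none).card ≤ sInf {n : ℕ |
          ∃ (T : DCTree (starGraph q) (none : Option (Fin q)))
          (B : Option (Fin q) → Finset (Fin p)),
          (Finset.univ : Finset (Option (Fin q))) ⊆ T.nodes ∧
          T.IsFeasible (starSlots C) B ∧ T.cost B 1 0 = n} := by
        rw [← hcost, DCTree.cost]
        simp only [mul_one, mul_zero, add_zero]
        exact Finset.single_le_sum (f := fun u => (B u).card) (fun _ _ => Nat.zero_le _) hnl
      exact le_trans (Nat.sInf_le ⟨B none, hhit, rfl⟩) hle
end

section
/- Any satellite bridge is at least as large as the minimum isotropic scattering value: |N(SB*)| ≤ Ξ(T_I). Concretely, given any tree T in G spanning M, the set S₁ = {λ(u,i) : u ∈ d⁺(T), i ∈ Υ(u,T)} of satellite nodes induces a connected subgraph of the extended graph, and every node of M is adjacent (in the extended graph) to some node of S₁; hence a spanning tree of this induced subgraph is a satellite bridge with Ξ(T) nodes. -/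
namespace DCTree

variable {α : Type*} [DecidableEq α] {H : SimpleGraph α} {r : α}

/-- unrooted degree of a node in the tree -/
def deg (T : DCTree H r) (u : α) : ℕ :=
  (T.children u).card + (if u = r then 0 else 1)

/-- the set `d⁺(T)` of nodes of (unrooted) degree greater than one -/
def dplus (T : DCTree H r) : Finset α :=
  T.nodes.filter fun u => 1 < T.deg u

/-- the set `d¹(T)` of nodes of (unrooted) degree one -/
def d1 (T : DCTree H r) : Finset α :=
  T.nodes.filter fun u => T.deg u = 1

/-- tree-neighbours of a node: its children together with its parent -/
def nb (T : DCTree H r) (u : α) : Finset α :=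
  T.children u ∪ (if u = r then ∅ else {T.parent u})

end DCTree

section Hitting

variable {α β : Type*} [DecidableEq β]

/-- `B` is a hitting set of the collection `{Γ v | v ∈ s}`. -/
def HitsAll (Γ : α → Finset β) (s : Finset α) (B : Finset β) : Prop :=
  ∀ v ∈ s, (B ∩ Γ v).Nonempty

/-- the minimum cardinality of a hitting set of `{Γ v | v ∈ s}` -/
noncomputable def minHitCard (Γ : α → Finset β) (s : Finset α) : ℕ :=
  sInf {n | ∃ B : Finset β, HitsAll Γ s B ∧ B.card = n}

end Hitting

/-- `Ξ(T) = ∑_{u ∈ d⁺(T)} |Υ(u,T)|`, where `Υ(u,T)` is a minimum hitting set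
of the collection `{Γ v | v ∈ nb_T(u)}` -/
noncomputable def Xi {α β : Type*} [DecidableEq α] [DecidableEq β]
    {H : SimpleGraph α} {r : α} (Γ : α → Finset β) (T : DCTree H r) : ℕ :=
  ∑ u ∈ T.dplus, minHitCard Γ (T.nb u)

section Extended

variable {V S : Type*}

/-- adjacency of the extended graph: nuclear nodes `Sum.inl u` and satellite
nodes `Sum.inr (u, i)` (satellite `λ(u,i)` exists when `i ∈ ⋃_{v ∈ nb(u)} Γ v`). -/
def ExtAdj (G : SimpleGraph V) (Γ : V → Finset S) :
    V ⊕ V × S → V ⊕ V × S → Prop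
  | .inl _, .inl _ => False
  | .inl u, .inr (w, j) =>
      (w = u ∧ ∃ v, G.Adj u v ∧ j ∈ Γ v) ∨ (G.Adj u w ∧ j ∈ Γ u)
  | .inr (w, j), .inl u =>
      (w = u ∧ ∃ v, G.Adj u v ∧ j ∈ Γ v) ∨ (G.Adj u w ∧ j ∈ Γ u)
  | .inr (u, i), .inr (v, j) =>
      (u = v ∧ i ≠ j ∧ (∃ w, G.Adj u w ∧ i ∈ Γ w) ∧ (∃ w, G.Adj u w ∧ j ∈ Γ w)) ∨
        (G.Adj u v ∧ i ∈ Γ v ∧ j ∈ Γ u)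

/-- the extended graph of a duty-cycled WSN -/
def ExtGraph (G : SimpleGraph V) (Γ : V → Finset S) : SimpleGraph (V ⊕ V × S) where
  Adj := ExtAdj G Γ
  symm := by
    refine ⟨?_⟩
    rintro (u | ⟨u, i⟩) (v | ⟨v, j⟩) h
    · cases h
    · exact h
    · exact h
    · rcases h with ⟨rfl, hij, h1, h2⟩ | ⟨hadj, h1, h2⟩
      · exact Or.inl ⟨rfl, Ne.symm hij, h2, h1⟩
      · exact Or.inr ⟨hadj.symm, h2, h1⟩
  loopless := by
    refine ⟨?_⟩
    rintro (u | ⟨u, i⟩) h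
    · cases h
    · rcases h with ⟨_, h, _, _⟩ | ⟨h, _⟩
      · exact h rfl
      · exact h.ne rfl

/-- `N` is (the node set of) a satellite bridge: a connected set of existing
satellite nodes such that every terminal in `M` is adjacent to one of them. -/
def IsSatBridge (G : SimpleGraph V) (Γ : V → Finset S) (M : Finset V)
    (N : Finset (V × S)) : Prop :=
  (∀ p ∈ N, ∃ v, G.Adj p.1 v ∧ p.2 ∈ Γ v) ∧
    ((ExtGraph G Γ).induce {x | ∃ p ∈ N, x = Sum.inr p}).Connected ∧
    ∀ m ∈ M, ∃ p ∈ N, (ExtGraph G Γ).Adj (.inl m) (.inr p)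

end Extended

section Aux

namespace DCTree

variable {α : Type*} [DecidableEq α] {H : SimpleGraph α} {r : α}

lemma mem_children_iff {T : DCTree H r} {u v : α} :
    v ∈ T.children u ↔ v ∈ T.nodes ∧ v ≠ r ∧ T.parent v = u := by
  simp [children, Finset.mem_filter]

lemma children_subset (T : DCTree H r) (u : α) : T.children u ⊆ T.nodes :=
  Finset.filter_subset _ _

lemma mem_dplus_iff {T : DCTree H r} {u : α} :
    u ∈ T.dplus ↔ u ∈ T.nodes ∧ 1 < T.deg u := by
  simp [dplus, Finset.mem_filter]

lemma nb_mem_nodes (T : DCTree H r) {u v : α} (hu : u ∈ T.nodes) (hv : v ∈ T.nb u) :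
    v ∈ T.nodes := by
  rcases Finset.mem_union.mp hv with h | h
  · exact T.children_subset u h
  · by_cases hr : u = r
    · simp [hr] at h
    · simp [hr] at h
      subst h
      exact T.parent_mem u hu hr

lemma adj_of_mem_nb (T : DCTree H r) {u v : α} (hu : u ∈ T.nodes) (hv : v ∈ T.nb u) :
    H.Adj u v := by
  rcases Finset.mem_union.mp hv with h | h
  · rcases mem_children_iff.mp h with ⟨h1, h2, h3⟩
    have := T.parent_adj v h1 h2
    rwa [h3] at this
  · by_cases hr : u = r
    · simp [hr] at h
    · simp [hr] at h
      subst h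
      exact (T.parent_adj u hu hr).symm

lemma mem_nb_symm (T : DCTree H r) {u v : α} (hu : u ∈ T.nodes) (hv : v ∈ T.nb u) :
    u ∈ T.nb v := by
  rcases Finset.mem_union.mp hv with h | h
  · rcases mem_children_iff.mp h with ⟨h1, h2, h3⟩
    apply Finset.mem_union_right
    simp [h2, h3]
  · by_cases hr : u = r
    · simp [hr] at h
    · simp [hr] at h
      subst h
      exact Finset.mem_union_left _ (mem_children_iff.mpr ⟨hu, hr, rfl⟩)

lemma depth_induction (T : DCTree H r) (P : α → Prop)
    (step : ∀ v ∈ T.nodes, (∀ w ∈ T.nodes, T.depth w < T.depth v → P w) → P v) :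
    ∀ v ∈ T.nodes, P v := by
  have key : ∀ n, ∀ v ∈ T.nodes, T.depth v = n → P v := by
    intro n
    induction n using Nat.strong_induction_on with
    | _ n ih =>
      intro v hv hn
      exact step v hv fun w hw hlt => ih _ (hn ▸ hlt) w hw rfl
  intro v hv
  exact key _ v hv rfl

lemma nodes_subset_pair (T : DCTree H r) {m : α}
    (h1 : T.children r ⊆ {m}) (h2 : T.children m = ∅) :
    ∀ v ∈ T.nodes, v = r ∨ v = m := by
  refine T.depth_induction _ ?_
  intro v hv ih
  by_cases hvr : v = r
  · exact Or.inl hvr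
  · have hp := T.parent_mem v hv hvr
    have hdlt := T.depth_lt v hv hvr
    rcases ih _ hp hdlt with h | h
    · right
      have : v ∈ T.children r := mem_children_iff.mpr ⟨hv, hvr, h⟩
      simpa using h1 this
    · exfalso
      have : v ∈ T.children m := mem_children_iff.mpr ⟨hv, hvr, h⟩
      simp [h2] at this

lemma depth_root_lt (T : DCTree H r) :
    ∀ v ∈ T.nodes, v ≠ r → T.depth r < T.depth v := by
  refine T.depth_induction _ ?_
  intro v hv ih hvr
  have hp := T.parent_mem v hv hvr
  have hdlt := T.depth_lt v hv hvr
  by_cases hpr : T.parent v = r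
  · rwa [hpr] at hdlt
  · exact lt_trans (ih _ hp hdlt hpr) hdlt

lemma depth_lt_of_children_root (T : DCTree H r) {u : α}
    (h1 : T.children r ⊆ {u}) :
    ∀ v ∈ T.nodes, v ≠ r → v ≠ u → T.depth u < T.depth v := by
  refine T.depth_induction _ ?_
  intro v hv ih hvr hvu
  have hp := T.parent_mem v hv hvr
  have hdlt := T.depth_lt v hv hvr
  by_cases hpr : T.parent v = r
  · exfalso
    have : v ∈ T.children r := mem_children_iff.mpr ⟨hv, hvr, hpr⟩
    exact hvu (by simpa using h1 this)
  · by_cases hpu : T.parent v = u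
    · rwa [hpu] at hdlt
    · exact lt_trans (ih _ hp hdlt hpr hpu) hdlt

lemma exists_dplus_nb (T : DCTree H r) {ρ u : α} (hρ : ρ ∈ T.dplus)
    (hmin : ∀ w ∈ T.dplus, T.depth ρ ≤ T.depth w)
    (hu : u ∈ T.dplus) (hne : u ≠ ρ) :
    ∃ v ∈ T.dplus, v ∈ T.nb u ∧ T.depth v < T.depth u := by
  have hun : u ∈ T.nodes := (mem_dplus_iff.mp hu).1
  have hρn : ρ ∈ T.nodes := (mem_dplus_iff.mp hρ).1
  have hur : u ≠ r := by
    rintro rfl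
    have h1 : T.depth u < T.depth ρ := T.depth_root_lt ρ hρn (Ne.symm hne)
    have h2 := hmin u hu
    omega
  have hpn : T.parent u ∈ T.nodes := T.parent_mem u hun hur
  have hdp : T.depth (T.parent u) < T.depth u := T.depth_lt u hun hur
  have hpnb : T.parent u ∈ T.nb u := by
    apply Finset.mem_union_right
    simp [hur]
  have huc : u ∈ T.children (T.parent u) := mem_children_iff.mpr ⟨hun, hur, rfl⟩
  refine ⟨T.parent u, mem_dplus_iff.mpr ⟨hpn, ?_⟩, hpnb, hdp⟩
  by_cases hpr : T.parent u = r
  · rw [hpr] at huc ⊢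
    simp only [deg, if_pos rfl]
    by_contra hle
    push_neg at hle
    have hsub : T.children r ⊆ {u} := by
      intro x hx
      have := Finset.card_le_one.mp (by omega) x hx u huc
      simp [this]
    have hρr : ρ ≠ r := by
      rintro rfl
      have := (mem_dplus_iff.mp hρ).2
      simp only [deg, if_pos rfl] at this
      omega
    have h1 := T.depth_lt_of_children_root hsub ρ hρn hρr (Ne.symm hne)
    have h2 := hmin u hu
    omega
  · simp only [deg, if_neg hpr]
    have : 0 < (T.children (T.parent u)).card := Finset.card_pos.mpr ⟨u, huc⟩
    omega

lemma dplus_cover (T : DCTree H r) (hd : T.dplus.Nonempty) :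
    ∀ m ∈ T.nodes, ∃ u ∈ T.dplus, u = m ∨ m ∈ T.nb u := by
  intro m hm
  by_cases hmd : m ∈ T.dplus
  · exact ⟨m, hmd, Or.inl rfl⟩
  have hdeg : T.deg m ≤ 1 := by
    by_contra h
    push_neg at h
    exact hmd (mem_dplus_iff.mpr ⟨hm, h⟩)
  by_cases hmr : m = r
  · subst hmr
    have hdr : (T.children m).card ≤ 1 := by
      simp only [deg, if_pos rfl] at hdeg
      omega
    rcases Nat.lt_or_ge (T.children m).card 1 with h0 | h1
    · exfalso
      have hemp : T.children m = ∅ := Finset.card_eq_zero.mp (by omega)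
      obtain ⟨w, hw⟩ := hd
      have hwn := (mem_dplus_iff.mp hw).1
      have hw2 := (mem_dplus_iff.mp hw).2
      rcases T.nodes_subset_pair (m := m) (by simp [hemp]) hemp w hwn with rfl | rfl <;>
        · simp only [deg, if_pos rfl, hemp] at hw2
          simp at hw2
    · have hcard : (T.children m).card = 1 := le_antisymm hdr h1
      obtain ⟨c, hc⟩ := Finset.card_eq_one.mp hcard
      have hcc : c ∈ T.children m := by simp [hc]
      obtain ⟨hcn, hcr, hcp⟩ := mem_children_iff.mp hcc
      refine ⟨c, mem_dplus_iff.mpr ⟨hcn, ?_⟩, Or.inr ?_⟩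
      · simp only [deg, if_neg hcr]
        by_contra hle
        push_neg at hle
        have hemp : T.children c = ∅ := Finset.card_eq_zero.mp (by omega)
        obtain ⟨w, hw⟩ := hd
        have hwn := (mem_dplus_iff.mp hw).1
        rcases T.nodes_subset_pair (m := c) (by simp [hc]) hemp w hwn with rfl | rfl
        · exact hmd hw
        · have := (mem_dplus_iff.mp hw).2
          simp only [deg, if_neg hcr] at this
          omega
      · exact Finset.mem_union_right _ (by simp [hcr, hcp])
  · have hchm : T.children m = ∅ := by
      simp only [deg, if_neg hmr] at hdeg
      exact Finset.card_eq_zero.mp (by omega)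
    have hpn := T.parent_mem m hm hmr
    have hmc : m ∈ T.children (T.parent m) := mem_children_iff.mpr ⟨hm, hmr, rfl⟩
    refine ⟨T.parent m, mem_dplus_iff.mpr ⟨hpn, ?_⟩, Or.inr
      (Finset.mem_union_left _ hmc)⟩
    by_cases hpr : T.parent m = r
    · rw [hpr] at hmc ⊢
      simp only [deg, if_pos rfl]
      by_contra hle
      push_neg at hle
      have hsub : T.children r ⊆ {m} := by
        intro x hx
        have := Finset.card_le_one.mp (by omega) x hx m hmc
        simp [this]
      obtain ⟨w, hw⟩ := hd
      have hwn := (mem_dplus_iff.mp hw).1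
      rcases T.nodes_subset_pair hsub hchm w hwn with rfl | rfl
      · have := (mem_dplus_iff.mp hw).2
        simp only [deg, if_pos rfl] at this
        omega
      · exact hmd hw
    · simp only [deg, if_neg hpr]
      have : 0 < (T.children (T.parent m)).card := Finset.card_pos.mpr ⟨m, hmc⟩
      omega

end DCTree

lemma exists_hit_witness {α β : Type*} [DecidableEq β] (Γ : α → Finset β)
    (s : Finset α) (B : Finset β) (hhit : HitsAll Γ s B)
    (hmin : B.card = minHitCard Γ s) {i : β} (hi : i ∈ B) :
    ∃ v ∈ s, i ∈ Γ v := by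
  by_contra h
  push_neg at h
  have hhit' : HitsAll Γ s (B.erase i) := by
    intro v hv
    obtain ⟨j, hj⟩ := hhit v hv
    rw [Finset.mem_inter] at hj
    exact ⟨j, Finset.mem_inter.mpr
      ⟨Finset.mem_erase.mpr ⟨fun hji => h v hv (hji ▸ hj.2), hj.1⟩, hj.2⟩⟩
  have h1 : minHitCard Γ s ≤ (B.erase i).card :=
    Nat.sInf_le ⟨B.erase i, hhit', rfl⟩
  have h2 : (B.erase i).card = B.card - 1 := Finset.card_erase_of_mem hi
  have h3 : 0 < B.card := Finset.card_pos.mpr ⟨i, hi⟩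
  omega

end Aux

/-- **Lemma 3.** Given any tree `T` in `G` spanning `M`, the set
`S₁ = {λ(u,i) : u ∈ d⁺(T), i ∈ Υ(u,T)}` of satellite nodes induces a connected
subgraph of the extended graph, every node of `M` is adjacent (in the extended
graph) to some node of `S₁`, and `|S₁| = Ξ(T)`; hence a spanning tree of this
induced subgraph is a satellite bridge with `Ξ(T)` nodes, so the minimum
satellite bridge satisfies `|N(SB*)| ≤ Ξ(T)` (in particular `≤ Ξ(T_I)`). -/
theorem satellite_bridge_le_Xi {V S : Type*} [DecidableEq V] [DecidableEq S]
    (G : SimpleGraph V) (hconn : G.Connected) (M : Finset V) (s : V)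
    (Γ : V → Finset S) (hΓ : ∀ v, (Γ v).Nonempty)
    (T : DCTree G s) (hM : M ⊆ T.nodes) (hd : T.dplus.Nonempty)
    (Υ : V → Finset S)
    (hUhit : ∀ u ∈ T.dplus, HitsAll Γ (T.nb u) (Υ u))
    (hUmin : ∀ u ∈ T.dplus, (Υ u).card = minHitCard Γ (T.nb u)) :
    (((ExtGraph G Γ).induce
        {x | ∃ p ∈ T.dplus.biUnion (fun u => (Υ u).image fun i => (u, i)),
          x = Sum.inr p}).Connected) ∧
    (∀ m ∈ M, ∃ p ∈ T.dplus.biUnion (fun u => (Υ u).image fun i => (u, i)),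
        (ExtGraph G Γ).Adj (.inl m) (.inr p)) ∧
    (T.dplus.biUnion (fun u => (Υ u).image fun i => (u, i))).card = Xi Γ T ∧
    (∀ N : Finset (V × S), IsSatBridge G Γ M N →
      (∀ N' : Finset (V × S), IsSatBridge G Γ M N' → N.card ≤ N'.card) →
      N.card ≤ Xi Γ T) := by
  classical
  set S₁ := T.dplus.biUnion (fun u => (Υ u).image fun i => (u, i)) with hS₁def
  have hin : ∀ u ∈ T.dplus, ∀ i ∈ Υ u, (u, i) ∈ S₁ := by
    intro u hu i hi
    simp only [hS₁def, Finset.mem_biUnion, Finset.mem_image]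
    exact ⟨u, hu, i, hi, rfl⟩
  have hout : ∀ p ∈ S₁, p.1 ∈ T.dplus ∧ p.2 ∈ Υ p.1 := by
    intro p hp
    simp only [hS₁def, Finset.mem_biUnion, Finset.mem_image] at hp
    obtain ⟨u, hu, i, hi, rfl⟩ := hp
    exact ⟨hu, hi⟩
  have hwit : ∀ u ∈ T.dplus, ∀ i ∈ Υ u, ∃ v, G.Adj u v ∧ i ∈ Γ v := by
    intro u hu i hi
    obtain ⟨v, hv, hiv⟩ :=
      exists_hit_witness Γ (T.nb u) (Υ u) (hUhit u hu) (hUmin u hu) hi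
    exact ⟨v, T.adj_of_mem_nb (DCTree.mem_dplus_iff.mp hu).1 hv, hiv⟩
  have hchild : ∀ u ∈ T.dplus, (T.children u).Nonempty := by
    intro u hu
    have h2 := (DCTree.mem_dplus_iff.mp hu).2
    rw [← Finset.card_pos]
    simp only [DCTree.deg] at h2
    split_ifs at h2 <;> omega
  have hUne : ∀ u ∈ T.dplus, (Υ u).Nonempty := by
    intro u hu
    obtain ⟨c, hc⟩ := hchild u hu
    obtain ⟨j, hj⟩ := hUhit u hu c (Finset.mem_union_left _ hc)
    exact ⟨j, (Finset.mem_inter.mp hj).1⟩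
  set Sset := {x : V ⊕ V × S | ∃ p ∈ S₁, x = Sum.inr p} with hSsetdef
  have hmemS : ∀ u ∈ T.dplus, ∀ i ∈ Υ u, (Sum.inr (u, i) : V ⊕ V × S) ∈ Sset :=
    fun u hu i hi => ⟨(u, i), hin u hu i hi, rfl⟩
  obtain ⟨ρ, hρ, hρmin⟩ := T.dplus.exists_min_image T.depth hd
  obtain ⟨iρ, hiρ⟩ := hUne ρ hρ
  set I := (ExtGraph G Γ).induce Sset with hIdef
  have hsame : ∀ u, ∀ hu : u ∈ T.dplus, ∀ i j, ∀ hi : i ∈ Υ u, ∀ hj : j ∈ Υ u,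
      I.Reachable ⟨_, hmemS u hu i hi⟩ ⟨_, hmemS u hu j hj⟩ := by
    intro u hu i j hi hj
    by_cases hij : i = j
    · subst hij
      exact SimpleGraph.Reachable.refl _
    · apply SimpleGraph.Adj.reachable
      show (ExtGraph G Γ).Adj (Sum.inr (u, i)) (Sum.inr (u, j))
      exact Or.inl ⟨rfl, hij, hwit u hu i hi, hwit u hu j hj⟩
  have hmain := T.depth_induction (fun u => ∀ hu : u ∈ T.dplus, ∀ i, ∀ hi : i ∈ Υ u,
      I.Reachable ⟨Sum.inr (u, i), hmemS u hu i hi⟩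
        ⟨Sum.inr (ρ, iρ), hmemS ρ hρ iρ hiρ⟩) ?main
  case main =>
    intro u hun ih hu i hi
    by_cases hne : u = ρ
    · subst hne
      exact hsame u hu i iρ hi hiρ
    · obtain ⟨v, hv, hvnb, hvd⟩ := T.exists_dplus_nb hρ hρmin hu hne
      obtain ⟨i', hi'⟩ := hUhit u hu v hvnb
      rw [Finset.mem_inter] at hi'
      obtain ⟨j, hj⟩ := hUhit v hv u
        (T.mem_nb_symm (DCTree.mem_dplus_iff.mp hu).1 hvnb)
      rw [Finset.mem_inter] at hj
      refine (hsame u hu i i' hi hi'.1).trans ?_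
      refine (SimpleGraph.Adj.reachable ?_ :
        I.Reachable ⟨Sum.inr (u, i'), hmemS u hu i' hi'.1⟩
          ⟨Sum.inr (v, j), hmemS v hv j hj.1⟩).trans
        (ih v (DCTree.mem_dplus_iff.mp hv).1 hvd hv j hj.1)
      show (ExtGraph G Γ).Adj (Sum.inr (u, i')) (Sum.inr (v, j))
      exact Or.inr ⟨T.adj_of_mem_nb (DCTree.mem_dplus_iff.mp hu).1 hvnb, hi'.2, hj.2⟩
  have hconn1 : I.Connected := by
    rw [SimpleGraph.connected_iff]
    constructor
    · rintro ⟨x, hx⟩ ⟨y, hy⟩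
      obtain ⟨p, hp, rfl⟩ := hx
      obtain ⟨q, hq, rfl⟩ := hy
      obtain ⟨hp1, hp2⟩ := hout p hp
      obtain ⟨hq1, hq2⟩ := hout q hq
      exact (hmain p.1 (DCTree.mem_dplus_iff.mp hp1).1 hp1 p.2 hp2).trans
        (hmain q.1 (DCTree.mem_dplus_iff.mp hq1).1 hq1 q.2 hq2).symm
    · exact ⟨⟨_, hmemS ρ hρ iρ hiρ⟩⟩
  have hcover : ∀ m ∈ M, ∃ p ∈ S₁, (ExtGraph G Γ).Adj (.inl m) (.inr p) := by
    intro m hm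
    obtain ⟨u, hu, hcase⟩ := T.dplus_cover hd m (hM hm)
    have hun := (DCTree.mem_dplus_iff.mp hu).1
    rcases hcase with rfl | hmnb
    · obtain ⟨c, hc⟩ := hchild u hu
      have hcnb : c ∈ T.nb u := Finset.mem_union_left _ hc
      obtain ⟨i, hi⟩ := hUhit u hu c hcnb
      rw [Finset.mem_inter] at hi
      refine ⟨(u, i), hin u hu i hi.1, ?_⟩
      exact Or.inl ⟨rfl, c, T.adj_of_mem_nb hun hcnb, hi.2⟩
    · obtain ⟨i, hi⟩ := hUhit u hu m hmnb
      rw [Finset.mem_inter] at hi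
      refine ⟨(u, i), hin u hu i hi.1, ?_⟩
      exact Or.inr ⟨(T.adj_of_mem_nb hun hmnb).symm, hi.2⟩
  have hcard : S₁.card = Xi Γ T := by
    rw [hS₁def, Finset.card_biUnion]
    · refine Finset.sum_congr rfl fun u hu => ?_
      rw [Finset.card_image_of_injective _
        (fun a b h => by injection h with h1 h2), hUmin u hu]
    · intro u hu v hv huv
      rw [Function.onFun, Finset.disjoint_left]
      rintro p hp hq
      simp only [Finset.mem_image] at hp hq
      obtain ⟨i, _, rfl⟩ := hp
      obtain ⟨j, _, h⟩ := hq
      exact huv (congrArg Prod.fst h).symm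
  refine ⟨hconn1, hcover, hcard, ?_⟩
  intro N hN hNmin
  have hbridge : IsSatBridge G Γ M S₁ :=
    ⟨fun p hp => hwit p.1 (hout p hp).1 p.2 (hout p hp).2, hconn1, hcover⟩
  calc N.card ≤ S₁.card := hNmin S₁ hbridge
    _ = Xi Γ T := hcard
end
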